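/- Let H be the two-parameter group acting on ℝ³ by (s,t)·v = (cos(s) v₁ − sin(s) v₂, sin(s) v₁ + cos(s) v₂, e^t v₃), i.e., rotation in the first two coordinates and dilation in the third. Let 𝒪₂ = {v ∈ ℝ³ : v₁² + v₂² ≠ 0 and v₃ ≠ 0}. Then the orbit space 𝒪₂/H contains no nonempty compact open subset. -/

import Mathlib

/-!
The invariant `v₀² + v₁²` of the action descends to a continuous map from `𝒪₂/H` to `ℝ`.
This map is open, because scaling a point of `𝒪₂` by `e^{t/2}` multiplies the invariant by `e^t`.
A nonempty compact open subset of `𝒪₂/H` would then have a nonempty compact open image in `ℝ`,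
that is, a nonempty clopen and compact subset of `ℝ`. No such set exists, since `ℝ` is connected
and not compact.
-/

open Set Topology Filter
open scoped Real

noncomputable section

/-- The action of `(s,t) ∈ ℝ²` on `ℝ³`: rotation by `s` in the first two coordinates and
dilation by `e^t` in the third. -/
def act (p : ℝ × ℝ) (v : Fin 3 → ℝ) : Fin 3 → ℝ :=
  ![Real.cos p.1 * v 0 - Real.sin p.1 * v 1,
    Real.sin p.1 * v 0 + Real.cos p.1 * v 1,
    Real.exp p.2 * v 2]

/-- `𝒪₂ = {v ∈ ℝ³ : v₁² + v₂² ≠ 0 and v₃ ≠ 0}`. -/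
def O2 : Set (Fin 3 → ℝ) := {v | v 0 ^ 2 + v 1 ^ 2 ≠ 0 ∧ v 2 ≠ 0}

/-- The orbit equivalence relation on `𝒪₂`; `Quot orbitRel` is the orbit space `𝒪₂/H`
with the quotient topology. -/
def orbitRel (x y : ↥O2) : Prop :=
  ∃ p : ℝ × ℝ, act p (x : Fin 3 → ℝ) = (y : Fin 3 → ℝ)

theorem isOpenMap_of_exists_isOpenMap_comp {X Y Z : Type*} [TopologicalSpace X]
    [TopologicalSpace Y] [TopologicalSpace Z] {f : X → Y}
    (h : ∀ x, ∃ (γ : Z → X) (z : Z), ContinuousAt γ z ∧ γ z = x ∧ IsOpenMap (f ∘ γ)) :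
    IsOpenMap f := by
  refine isOpenMap_iff_nhds_le.2 fun x => ?_
  obtain ⟨γ, z, hγ, rfl, hfγ⟩ := h x
  calc 𝓝 (f (γ z)) ≤ (𝓝 z).map (f ∘ γ) := isOpenMap_iff_nhds_le.1 hfγ z
    _ = ((𝓝 z).map γ).map f := map_map.symm
    _ ≤ (𝓝 (γ z)).map f := map_mono hγ

theorem not_exists_nonempty_isCompact_isOpen_of_isOpenMap {X Y : Type*} [TopologicalSpace X]
    [TopologicalSpace Y] [T2Space Y] [PreconnectedSpace Y] [NoncompactSpace Y] {f : X → Y}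
    (hf : Continuous f) (hfo : IsOpenMap f) :
    ¬ ∃ K : Set X, K.Nonempty ∧ IsCompact K ∧ IsOpen K := by
  rintro ⟨K, hne, hK, hKo⟩
  have hclopen : IsClopen (f '' K) := ⟨(hK.image hf).isClosed, hfo K hKo⟩
  exact noncompact_univ Y (hclopen.eq_univ (hne.image f) ▸ hK.image hf)

def radiusSq (v : Fin 3 → ℝ) : ℝ := v 0 ^ 2 + v 1 ^ 2

theorem radiusSq_act (p : ℝ × ℝ) (v : Fin 3 → ℝ) : radiusSq (act p v) = radiusSq v := by
  simp only [radiusSq, act, Matrix.cons_val_zero, Matrix.cons_val_one]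
  linear_combination (v 0 ^ 2 + v 1 ^ 2) * Real.sin_sq_add_cos_sq p.1

theorem radiusSq_smul (c : ℝ) (v : Fin 3 → ℝ) : radiusSq (c • v) = c ^ 2 * radiusSq v := by
  simp only [radiusSq, Pi.smul_apply, smul_eq_mul]
  ring

theorem smul_mem_O2 {c : ℝ} (hc : c ≠ 0) {v : Fin 3 → ℝ} (hv : v ∈ O2) : c • v ∈ O2 :=
  ⟨show radiusSq (c • v) ≠ 0 by rw [radiusSq_smul]; exact mul_ne_zero (pow_ne_zero 2 hc) hv.1,
    mul_ne_zero hc hv.2⟩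

theorem isOpenMap_radiusSq_O2 : IsOpenMap fun v : O2 => radiusSq v := by
  refine isOpenMap_of_exists_isOpenMap_comp (Z := ℝ) fun v => ?_
  let γ : ℝ → O2 := fun t => ⟨Real.exp (t / 2) • v.1, smul_mem_O2 (Real.exp_ne_zero _) v.2⟩
  have hγ : (fun v : O2 => radiusSq v) ∘ γ = (· * radiusSq v) ∘ Real.exp := by
    ext t
    simp only [γ, Function.comp_apply, radiusSq_smul, sq, ← Real.exp_add, add_halves]
  have hv : 0 < radiusSq v := lt_of_le_of_ne (by unfold radiusSq; positivity) (Ne.symm v.2.1)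
  refine ⟨γ, 0, by fun_prop, by simp [γ], ?_⟩
  rw [hγ]
  exact (Homeomorph.mulRight₀ _ hv.ne').isOpenMap.comp Real.isOpenEmbedding_exp.isOpenMap

def orbitRadiusSq : Quot orbitRel → ℝ :=
  Quot.lift (fun v => radiusSq v) fun _ _ ⟨p, hp⟩ => by rw [← hp, radiusSq_act]

theorem continuous_orbitRadiusSq : Continuous orbitRadiusSq :=
  continuous_quot_lift _ <|
    (show Continuous radiusSq by unfold radiusSq; fun_prop).comp continuous_subtype_val

theorem isOpenMap_orbitRadiusSq : IsOpenMap orbitRadiusSq :=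
  IsOpenMap.of_comp continuous_quot_mk Quot.mk_surjective isOpenMap_radiusSq_O2

/-- For the rotation-dilation group `H = SO(2) × {e^t}` acting on
`ℝ³`, the orbit space `𝒪₂/H` contains no nonempty compact open subset. -/
theorem no_compact_open_rotation_case :
    ¬ ∃ K : Set (Quot orbitRel), K.Nonempty ∧ IsCompact K ∧ IsOpen K :=
  not_exists_nonempty_isCompact_isOpen_of_isOpenMap continuous_orbitRadiusSq
    isOpenMap_orbitRadiusSq
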